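/- arXiv:2305.04453 — 5 statements merged into one kernel-verified Lean document; each statement's English description precedes it below -/
import Mathlib

section
/- Closed form for the dual slack variables (unlimited case): defining β_{u,1}=1-γ, β_{u,2}=β_{u,1}-γ+γ Σ_l A_{u,l,1}, and β_{u,t}=γ Σ_l Σ_{t'≤t-2} B_{u,l,t'} Pr{d_l=t-t'} + β_{u,t-1} - γ + γ Σ_l A_{u,l,t-1} for t∈[3,T-1], where A_{u,l,t} = (1/L) - B_{u,l,t} Pr{d_l ≥ 2}, it holds for every t ≥ 2 that β_{u,t} = 1 - γ - γ Σ_l Σ_{t'<t} B_{u,l,t'} Pr{d_l ≥ t-t'+1}. -/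
/-- Closed form of the dual slack variables β (unlimited case):
β_t = 1 - γ - γ Σ_l Σ_{t'<t} B_{l,t'} Pr{d_l ≥ t-t'+1} for all 2 ≤ t ≤ T-1. -/
theorem stmt10 {Λ : Type*} (Lv : Finset Λ) (L T : ℕ) (hL : 1 ≤ L) (hT : 3 ≤ T)
    (hcard : Lv.card = L) (γ : ℝ)
    (B : Λ → ℕ → ℝ)
    (Pr PrGe : Λ → ℕ → ℝ)
    (hPrGe1 : ∀ l, PrGe l 1 = 1)
    (hPrGe : ∀ l k, PrGe l k = Pr l k + PrGe l (k + 1))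
    (A : Λ → ℕ → ℝ) (hA : ∀ l t, A l t = 1 / (L : ℝ) - B l t * PrGe l 2)
    (β : ℕ → ℝ)
    (hβ1 : β 1 = 1 - γ)
    (hβ2 : β 2 = β 1 - γ + γ * ∑ l ∈ Lv, A l 1)
    (hβ : ∀ t, 3 ≤ t → t ≤ T - 1 →
      β t = γ * ∑ l ∈ Lv, ∑ t' ∈ Finset.Icc 1 (t - 2), B l t' * Pr l (t - t')
        + β (t - 1) - γ + γ * ∑ l ∈ Lv, A l (t - 1)) :
    ∀ t, 2 ≤ t → t ≤ T - 1 →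
      β t = 1 - γ - γ * ∑ l ∈ Lv, ∑ t' ∈ Finset.Icc 1 (t - 1),
        B l t' * PrGe l (t - t' + 1) := by
  have hsum1 : (∑ _l ∈ Lv, (1 / (L : ℝ))) = 1 := by
    rw [Finset.sum_const, hcard, nsmul_eq_mul]
    field_simp
  intro t ht2
  induction t, ht2 using Nat.le_induction with
  | base =>
    intro _
    rw [hβ2, hβ1]
    simp only [hA]
    rw [Finset.sum_sub_distrib, hsum1]
    norm_num
    ring
  | succ n hn ih =>
    intro hle
    obtain ⟨m, rfl⟩ : ∃ m, n = m + 2 := ⟨n - 2, by omega⟩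
    have h1 := hβ (m + 3) (by omega) hle
    have h2 := ih (by omega)
    simp only [show m + 2 + 1 = m + 3 from rfl, show m + 3 - 1 = m + 2 from rfl,
      show m + 3 - 2 = m + 1 from rfl, show m + 2 - 1 = m + 1 from rfl] at h1 h2 ⊢
    have key : ∀ l ∈ Lv, ∑ t' ∈ Finset.Icc 1 (m + 2), B l t' * PrGe l (m + 3 - t' + 1)
        = ∑ t' ∈ Finset.Icc 1 (m + 1),
            (B l t' * PrGe l (m + 2 - t' + 1) - B l t' * Pr l (m + 3 - t'))
          + B l (m + 2) * PrGe l 2 := by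
      intro l _
      rw [Finset.sum_Icc_succ_top (by omega : 1 ≤ m + 2)]
      congr 1
      · apply Finset.sum_congr rfl
        intro t' ht'
        rw [Finset.mem_Icc] at ht'
        have e1 : m + 3 - t' + 1 = (m + 2 - t' + 1) + 1 := by omega
        have e2 : m + 3 - t' = m + 2 - t' + 1 := by omega
        rw [e1, e2, hPrGe l (m + 2 - t' + 1)]
        ring
      · have e : m + 3 - (m + 1 + 1) + 1 = 2 := by omega
        rw [e]
    rw [h1, h2, Finset.sum_congr rfl key]
    simp only [hA, Finset.sum_add_distrib, Finset.sum_sub_distrib, hsum1]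
    ring
end

section
/- Dual feasibility in the unlimited rejection case: with α_{u,t}=γ for all t and β_{u,t}=1-γ-γ Σ_l Σ_{t'<t} B_{u,l,t'} Pr{d_l ≥ t-t'+1} (β_{u,1}=1-γ), if γ ∈ [0,1/2] and the primal machine-capacity constraint Σ_{t'<t} Σ_l B_{u,l,t'} Pr{d_l ≥ t-t'+1} + Σ_l B_{u,l,t} ≤ 1 holds for all t, then (α,β) satisfies all constraints of the dual LP (28): α_{u,1}+β_{u,1} ≤ 1; α_{u,2}+β_{u,2} ≤ α_{u,1} Σ_l A_{u,l,1} + β_{u,1}; for t∈[3,T-1], α_{u,t}+β_{u,t} ≤ Σ_{t'≤t-2} α_{u,t'} Σ_l B_{u,l,t'} Pr{d_l=t-t'} + α_{u,t-1} Σ_l A_{u,l,t-1} + β_{u,t-1}; α_{u,T} ≤ Σ_{t'≤T-2} α_{u,t'} Σ_l B_{u,l,t'} Pr{d_l=T-t'} + β_{u,T-1} + α_{u,T-1} Σ_l A_{u,l,T-1}; and α, β ≥ 0. -/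
/-- Dual feasibility in the unlimited rejection case: with α_t = γ and
β_t = 1 - γ - γ Σ_l Σ_{t'<t} B_{l,t'} Pr{d_l ≥ t-t'+1}, if γ ∈ [0,1/2] and the
machine-capacity constraint holds, then (α,β) satisfies all dual constraints. -/
theorem stmt11 {Λ : Type*} (Lv : Finset Λ) (L T : ℕ) (hL : 1 ≤ L) (hT : 3 ≤ T)
    (hcard : Lv.card = L)
    (γ : ℝ) (hγ0 : 0 ≤ γ) (hγ2 : γ ≤ 1 / 2)
    (B : Λ → ℕ → ℝ) (hB : ∀ l t, 0 ≤ B l t)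
    (Pr PrGe : Λ → ℕ → ℝ) (hPr0 : ∀ l d, 0 ≤ Pr l d)
    (hPrGe0 : ∀ l k, 0 ≤ PrGe l k)
    (hPrGe1 : ∀ l, PrGe l 1 = 1)
    (hPrGe : ∀ l k, PrGe l k = Pr l k + PrGe l (k + 1))
    (A : Λ → ℕ → ℝ) (hA : ∀ l t, A l t = 1 / (L : ℝ) - B l t * PrGe l 2)
    (α β : ℕ → ℝ) (hα : ∀ t, α t = γ)
    (hβ : ∀ t, β t = 1 - γ - γ * ∑ l ∈ Lv, ∑ t' ∈ Finset.Icc 1 (t - 1),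
      B l t' * PrGe l (t - t' + 1))
    (hcap : ∀ t, 1 ≤ t → t ≤ T →
      ∑ l ∈ Lv, ∑ t' ∈ Finset.Icc 1 (t - 1), B l t' * PrGe l (t - t' + 1)
        + ∑ l ∈ Lv, B l t ≤ 1) :
    (α 1 + β 1 ≤ 1) ∧
    (α 2 + β 2 ≤ α 1 * ∑ l ∈ Lv, A l 1 + β 1) ∧
    (∀ t, 3 ≤ t → t ≤ T - 1 →
      α t + β t ≤ ∑ t' ∈ Finset.Icc 1 (t - 2), α t' * ∑ l ∈ Lv, B l t' * Pr l (t - t')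
        + α (t - 1) * ∑ l ∈ Lv, A l (t - 1) + β (t - 1)) ∧
    (α T ≤ ∑ t' ∈ Finset.Icc 1 (T - 2), α t' * ∑ l ∈ Lv, B l t' * Pr l (T - t')
        + β (T - 1) + α (T - 1) * ∑ l ∈ Lv, A l (T - 1)) ∧
    (∀ t, 0 ≤ α t) ∧
    (∀ t, 1 ≤ t → t ≤ T - 1 → 0 ≤ β t) := by
  set S : ℕ → ℝ := fun t => ∑ l ∈ Lv, ∑ t' ∈ Finset.Icc 1 (t - 1),
      B l t' * PrGe l (t - t' + 1) with hSdef
  have hβ' : ∀ t, β t = 1 - γ - γ * S t := hβ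
  have hS0 : ∀ t, 0 ≤ S t := fun t =>
    Finset.sum_nonneg fun l _ => Finset.sum_nonneg fun t' _ =>
      mul_nonneg (hB _ _) (hPrGe0 _ _)
  have hSle : ∀ t, 1 ≤ t → t ≤ T → S t ≤ 1 := by
    intro t h1 h2
    have h := hcap t h1 h2
    have hBt : (0:ℝ) ≤ ∑ l ∈ Lv, B l t := Finset.sum_nonneg fun l _ => hB l t
    simpa using by linarith [h]
  have hsumA : ∀ t, ∑ l ∈ Lv, A l t = 1 - ∑ l ∈ Lv, B l t * PrGe l 2 := by
    intro t
    have hL0 : (L:ℝ) ≠ 0 := by positivity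
    simp only [hA, Finset.sum_sub_distrib, Finset.sum_const, hcard, nsmul_eq_mul]
    field_simp
  -- S 1 = 0, S 2 = ∑ B l 1 * PrGe l 2
  have hS1 : S 1 = 0 := by simp [hSdef]
  have hS2 : S 2 = ∑ l ∈ Lv, B l 1 * PrGe l 2 := by
    simp [hSdef]
  -- key telescoping identity
  have key : ∀ t, 3 ≤ t →
      S t + ∑ t' ∈ Finset.Icc 1 (t - 2), ∑ l ∈ Lv, B l t' * Pr l (t - t')
        = S (t - 1) + ∑ l ∈ Lv, B l (t - 1) * PrGe l 2 := by
    intro t ht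
    obtain ⟨k, rfl⟩ : ∃ k, t = k + 3 := ⟨t - 3, by omega⟩
    have e1 : k + 3 - 1 = k + 2 := by omega
    have e2 : k + 3 - 2 = k + 1 := by omega
    have e2' : k + 2 - 1 = k + 1 := by omega
    simp only [hSdef, e1, e2, e2']
    rw [Finset.sum_comm (s := Finset.Icc 1 (k+1))]
    have split : ∀ l ∈ Lv,
        ∑ t' ∈ Finset.Icc 1 (k + 2), B l t' * PrGe l (k + 3 - t' + 1)
          = (∑ t' ∈ Finset.Icc 1 (k + 1), B l t' * PrGe l (k + 3 - t' + 1))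
            + B l (k + 2) * PrGe l 2 := by
      intro l _
      rw [Finset.sum_Icc_succ_top (by omega : 1 ≤ k + 2)]
      have e : k + 3 - (k + 1 + 1) + 1 = 2 := by omega
      rw [e]
    rw [Finset.sum_congr rfl split, Finset.sum_add_distrib]
    have split2 : ∀ l ∈ Lv,
        ∑ t' ∈ Finset.Icc 1 (k + 1), B l t' * PrGe l (k + 2 - t' + 1)
          = ∑ t' ∈ Finset.Icc 1 (k + 1),
              (B l t' * Pr l (k + 3 - t') + B l t' * PrGe l (k + 3 - t' + 1)) := by
      intro l _
      refine Finset.sum_congr rfl fun t' ht' => ?_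
      rw [Finset.mem_Icc] at ht'
      have e3 : k + 2 - t' + 1 = k + 3 - t' := by omega
      have e4 : k + 3 - t' + 1 = (k + 3 - t') + 1 := by omega
      rw [e3, e4, hPrGe l (k + 3 - t'), mul_add]
    rw [Finset.sum_congr rfl split2]
    simp only [Finset.sum_add_distrib]
    ring
  refine ⟨?_, ?_, ?_, ?_, ?_, ?_⟩
  · rw [hα, hβ', hS1]; ring_nf; norm_num
  · rw [hα, hα, hβ', hβ', hS1, hS2, hsumA 1]
    apply le_of_eq; ring
  · intro t h3 hTm
    have hk := key t h3
    rw [hα, hα, hβ', hβ']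
    have : ∑ t' ∈ Finset.Icc 1 (t - 2), α t' * ∑ l ∈ Lv, B l t' * Pr l (t - t')
        = γ * ∑ t' ∈ Finset.Icc 1 (t - 2), ∑ l ∈ Lv, B l t' * Pr l (t - t') := by
      rw [Finset.mul_sum]
      exact Finset.sum_congr rfl fun t' _ => by rw [hα]
    rw [this, hsumA (t - 1)]
    nlinarith [hk]
  · have hk := key T hT
    have hST : S T ≤ 1 := hSle T (by omega) le_rfl
    rw [hα, hα, hβ']
    have : ∑ t' ∈ Finset.Icc 1 (T - 2), α t' * ∑ l ∈ Lv, B l t' * Pr l (T - t')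
        = γ * ∑ t' ∈ Finset.Icc 1 (T - 2), ∑ l ∈ Lv, B l t' * Pr l (T - t') := by
      rw [Finset.mul_sum]
      exact Finset.sum_congr rfl fun t' _ => by rw [hα]
    rw [this, hsumA (T - 1)]
    nlinarith [hk, hST, hS0 T]
  · intro t; rw [hα]; exact hγ0
  · intro t h1 h2
    have hSt : S t ≤ 1 := hSle t h1 (by omega)
    rw [hβ']
    nlinarith [hS0 t]
end

section
/- Reference system lower bound (unlimited rejections, Lemma 3): if the nonnegative sequence (R̃_{u,t})_{t∈[T]} satisfies R̃_{u,t} ≥ Σ_l B_{u,l,t} r'_{u,l,t} + Σ_l A_{u,l,t} R̃_{u,t+1} + Σ_l B_{u,l,t} Σ_{d'=2}^{T-t} Pr{d_l=d'} R̃_{u,t+d'} and R̃_{u,t} ≥ R̃_{u,t+1} for t∈[T-1], with R̃_{u,T} ≥ Σ_l B_{u,l,T} r'_{u,l,T}, and if the capacity condition Σ_{t'<t} Σ_l B_{u,l,t'} Pr{d_l ≥ t-t'+1} + Σ_l B_{u,l,t} ≤ 1 holds for all t, then R̃_{u,1} ≥ (1/2) Σ_{t∈[T]} Σ_l B_{u,l,t}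 r'_{u,l,t}. -/
lemma icc_split_bot (f : ℕ → ℝ) {a b : ℕ} (h : a ≤ b) :
    ∑ m ∈ Finset.Icc a b, f m = f a + ∑ m ∈ Finset.Icc (a+1) b, f m := by
  have he : Finset.Icc a b = insert a (Finset.Icc (a+1) b) := by
    ext x; simp only [Finset.mem_Icc, Finset.mem_insert]; omega
  rw [he, Finset.sum_insert (by simp [Finset.mem_Icc])]

lemma icc_split_top (f : ℕ → ℝ) {b : ℕ} (h : 1 ≤ b) :
    ∑ m ∈ Finset.Icc 1 b, f m = (∑ m ∈ Finset.Icc 1 (b-1), f m) + f b := by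
  have he : Finset.Icc 1 b = insert b (Finset.Icc 1 (b-1)) := by
    ext x; simp only [Finset.mem_Icc, Finset.mem_insert]; omega
  rw [he, Finset.sum_insert (by simp only [Finset.mem_Icc]; omega)]; ring

lemma icc_shift (f : ℕ → ℝ) (t a b : ℕ) :
    ∑ d ∈ Finset.Icc a b, f (t + d) = ∑ m ∈ Finset.Icc (t + a) (t + b), f m := by
  rw [← Finset.map_add_left_Icc, Finset.sum_map]
  simp [addLeftEmbedding]

/-- Reference system lower bound, unlimited rejections (Lemma 3):
R̃_{u,1} ≥ (1/2) Σ_{t∈[T]} Σ_l B_{l,t} r'_{l,t}. -/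
theorem stmt12 {Λ : Type*} (Lv : Finset Λ) (L T : ℕ) (hL : 1 ≤ L) (hT : 1 ≤ T)
    (hcard : Lv.card = L)
    (B r' : Λ → ℕ → ℝ) (hB : ∀ l t, 0 ≤ B l t) (hr' : ∀ l t, 0 ≤ r' l t)
    (Pr PrGe : Λ → ℕ → ℝ) (hPr0 : ∀ l d, 0 ≤ Pr l d)
    (hPrGe1 : ∀ l, PrGe l 1 = 1)
    (hPrGe : ∀ l k, PrGe l k = Pr l k + PrGe l (k + 1))
    (A : Λ → ℕ → ℝ) (hA : ∀ l t, A l t = 1 / (L : ℝ) - B l t * PrGe l 2)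
    (Rt : ℕ → ℝ) (hRt0 : ∀ t, 0 ≤ Rt t)
    (hrec : ∀ t, 1 ≤ t → t ≤ T - 1 →
      Rt t ≥ ∑ l ∈ Lv, B l t * r' l t + ∑ l ∈ Lv, A l t * Rt (t + 1)
        + ∑ l ∈ Lv, B l t * ∑ d' ∈ Finset.Icc 2 (T - t), Pr l d' * Rt (t + d'))
    (hmono : ∀ t, 1 ≤ t → t ≤ T - 1 → Rt t ≥ Rt (t + 1))
    (hRT : Rt T ≥ ∑ l ∈ Lv, B l T * r' l T)
    (hcap : ∀ t, 1 ≤ t → t ≤ T →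
      ∑ l ∈ Lv, ∑ t' ∈ Finset.Icc 1 (t - 1), B l t' * PrGe l (t - t' + 1)
        + ∑ l ∈ Lv, B l t ≤ 1) :
    Rt 1 ≥ (1 / 2) * ∑ t ∈ Finset.Icc 1 T, ∑ l ∈ Lv, B l t * r' l t := by
  have hBt : ∀ t, 0 ≤ ∑ l ∈ Lv, B l t := fun t => Finset.sum_nonneg (fun l _ => hB l t)
  -- capacity gives G t ≤ 1
  have hG : ∀ t, 1 ≤ t → t ≤ T →
      ∑ l ∈ Lv, ∑ s ∈ Finset.Icc 1 (t-1), B l s * PrGe l (t - s + 1) ≤ 1 := by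
    intro t h1 h2
    have h3 := hcap t h1 h2
    have h4 := hBt t
    linarith
  have key : ∀ t, 1 ≤ t → t ≤ T →
      Rt 1 ≥ (1/2) * (∑ s ∈ Finset.Icc 1 (t-1), ∑ l ∈ Lv, B l s * r' l s)
        + (1 - (∑ l ∈ Lv, ∑ s ∈ Finset.Icc 1 (t-1), B l s * PrGe l (t - s + 1)) / 2) * Rt t
        + (1/2) * ∑ m ∈ Finset.Icc (t+1) T,
            (∑ l ∈ Lv, ∑ s ∈ Finset.Icc 1 (t-1), B l s * Pr l (m - s)) * Rt m := by
    intro t ht0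
    induction t, ht0 using Nat.le_induction with
    | base =>
      intro _
      have he : Finset.Icc 1 (1-1) = (∅ : Finset ℕ) := by decide
      simp [he]
    | succ t ht IH =>
      intro hT1
      have htT : t ≤ T := by omega
      have hIH := IH htT
      have ht1 : t + 1 - 1 = t := rfl
      have ht2 : t + 1 + 1 = t + 2 := rfl
      -- (a) reward split
      have ha : ∑ s ∈ Finset.Icc 1 (t+1-1), ∑ l ∈ Lv, B l s * r' l s
          = (∑ s ∈ Finset.Icc 1 (t-1), ∑ l ∈ Lv, B l s * r' l s)
            + ∑ l ∈ Lv, B l t * r' l t := by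
        rw [ht1]; exact icc_split_top (fun s => ∑ l ∈ Lv, B l s * r' l s) ht
      -- (b) split future sum in IH
      have hb : ∑ m ∈ Finset.Icc (t+1) T,
            (∑ l ∈ Lv, ∑ s ∈ Finset.Icc 1 (t-1), B l s * Pr l (m - s)) * Rt m
          = (∑ l ∈ Lv, ∑ s ∈ Finset.Icc 1 (t-1), B l s * Pr l (t + 1 - s)) * Rt (t+1)
            + ∑ m ∈ Finset.Icc (t+2) T,
              (∑ l ∈ Lv, ∑ s ∈ Finset.Icc 1 (t-1), B l s * Pr l (m - s)) * Rt m :=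
        icc_split_bot
          (fun m => (∑ l ∈ Lv, ∑ s ∈ Finset.Icc 1 (t-1), B l s * Pr l (m - s)) * Rt m) hT1
      -- sum of A's
      have hA' : ∑ l ∈ Lv, A l t * Rt (t + 1)
          = (1 - ∑ l ∈ Lv, B l t * PrGe l 2) * Rt (t+1) := by
        rw [← Finset.sum_mul]
        congr 1
        have h1 : ∑ l ∈ Lv, A l t
            = (L : ℝ) * (1 / (L : ℝ)) - ∑ l ∈ Lv, B l t * PrGe l 2 := by
          simp only [hA]
          rw [Finset.sum_sub_distrib, Finset.sum_const, hcard, nsmul_eq_mul]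
        rw [h1]
        have hL0 : (L : ℝ) ≠ 0 := Nat.cast_ne_zero.mpr (by omega)
        field_simp
      -- delay term reindex
      have hD : ∑ l ∈ Lv, B l t * ∑ d' ∈ Finset.Icc 2 (T - t), Pr l d' * Rt (t + d')
          = ∑ m ∈ Finset.Icc (t+2) T, (∑ l ∈ Lv, B l t * Pr l (m - t)) * Rt m := by
        have hper : ∀ l ∈ Lv, B l t * ∑ d' ∈ Finset.Icc 2 (T - t), Pr l d' * Rt (t + d')
            = ∑ m ∈ Finset.Icc (t+2) T, B l t * Pr l (m - t) * Rt m := by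
          intro l _
          rw [Finset.mul_sum]
          have hs := icc_shift (fun m => B l t * Pr l (m - t) * Rt m) t 2 (T - t)
          have hTt : t + (T - t) = T := by omega
          rw [hTt] at hs
          rw [← hs]
          apply Finset.sum_congr rfl
          intro d _
          have hdd : t + d - t = d := by omega
          rw [hdd]; ring
        rw [Finset.sum_congr rfl hper, Finset.sum_comm]
        exact Finset.sum_congr rfl (fun m _ => (Finset.sum_mul _ _ _).symm)
      -- V recursion
      have hV : ∑ m ∈ Finset.Icc (t+2) T,
            (∑ l ∈ Lv, ∑ s ∈ Finset.Icc 1 (t+1-1), B l s * Pr l (m - s)) * Rt m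
          = (∑ m ∈ Finset.Icc (t+2) T,
              (∑ l ∈ Lv, ∑ s ∈ Finset.Icc 1 (t-1), B l s * Pr l (m - s)) * Rt m)
            + ∑ m ∈ Finset.Icc (t+2) T, (∑ l ∈ Lv, B l t * Pr l (m - t)) * Rt m := by
        rw [← Finset.sum_add_distrib]
        apply Finset.sum_congr rfl
        intro m _
        rw [ht1, ← add_mul]
        congr 1
        rw [← Finset.sum_add_distrib]
        exact Finset.sum_congr rfl
          (fun l _ => icc_split_top (fun s => B l s * Pr l (m - s)) ht)
      -- G recursion
      have hGrel : ∑ l ∈ Lv, ∑ s ∈ Finset.Icc 1 (t-1), B l s * PrGe l (t - s + 1)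
          = (∑ l ∈ Lv, ∑ s ∈ Finset.Icc 1 (t-1), B l s * Pr l (t + 1 - s))
            + (∑ l ∈ Lv, ∑ s ∈ Finset.Icc 1 (t+1-1), B l s * PrGe l (t + 1 - s + 1))
            - ∑ l ∈ Lv, B l t * PrGe l 2 := by
        rw [ht1]
        have e1 : ∑ l ∈ Lv, ∑ s ∈ Finset.Icc 1 t, B l s * PrGe l (t + 1 - s + 1)
            = (∑ l ∈ Lv, ∑ s ∈ Finset.Icc 1 (t-1), B l s * PrGe l (t + 1 - s + 1))
              + ∑ l ∈ Lv, B l t * PrGe l 2 := by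
          rw [← Finset.sum_add_distrib]
          apply Finset.sum_congr rfl
          intro l _
          rw [icc_split_top (fun s => B l s * PrGe l (t + 1 - s + 1)) ht]
          simp only [show t + 1 - t + 1 = 2 from by omega]
        rw [e1]
        rw [show ∀ x y z : ℝ, x + (y + z) - z = x + y from fun x y z => by ring]
        rw [← Finset.sum_add_distrib]
        apply Finset.sum_congr rfl
        intro l _
        rw [← Finset.sum_add_distrib]
        apply Finset.sum_congr rfl
        intro s hs
        have hs' : 1 ≤ s ∧ s ≤ t - 1 := Finset.mem_Icc.mp hs
        have e2 : t + 1 - s = t - s + 1 := by omega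
        rw [e2, ← mul_add, ← hPrGe l (t - s + 1)]
      -- rewritten recursion
      have hrec' : Rt t ≥ ∑ l ∈ Lv, B l t * r' l t
          + (1 - ∑ l ∈ Lv, B l t * PrGe l 2) * Rt (t+1)
          + ∑ m ∈ Finset.Icc (t+2) T, (∑ l ∈ Lv, B l t * Pr l (m - t)) * Rt m := by
        have h := hrec t ht (by omega)
        rw [hA', hD] at h
        exact h
      have hmono' := hmono t ht (by omega)
      have hGle := hG t ht htT
      have hGnn : (0:ℝ) ≤ 1/2 - (∑ l ∈ Lv, ∑ s ∈ Finset.Icc 1 (t-1),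
          B l s * PrGe l (t - s + 1)) / 2 := by linarith
      have hmul1 : (1/2 - (∑ l ∈ Lv, ∑ s ∈ Finset.Icc 1 (t-1),
              B l s * PrGe l (t - s + 1)) / 2) * Rt t
          ≥ (1/2 - (∑ l ∈ Lv, ∑ s ∈ Finset.Icc 1 (t-1),
              B l s * PrGe l (t - s + 1)) / 2) * Rt (t+1) :=
        mul_le_mul_of_nonneg_left hmono' hGnn
      -- coefficient identity for Rt (t+1)
      have hcoef : (1/2) * ((1 - ∑ l ∈ Lv, B l t * PrGe l 2) * Rt (t+1))
          + (1/2 - (∑ l ∈ Lv, ∑ s ∈ Finset.Icc 1 (t-1),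
              B l s * PrGe l (t - s + 1)) / 2) * Rt (t+1)
          + (1/2) * ((∑ l ∈ Lv, ∑ s ∈ Finset.Icc 1 (t-1),
              B l s * Pr l (t + 1 - s)) * Rt (t+1))
          = (1 - (∑ l ∈ Lv, ∑ s ∈ Finset.Icc 1 (t+1-1),
              B l s * PrGe l (t + 1 - s + 1)) / 2) * Rt (t+1) := by
        rw [hGrel]; ring
      -- split of the head coefficient
      have hsplit : (1 - (∑ l ∈ Lv, ∑ s ∈ Finset.Icc 1 (t-1),
              B l s * PrGe l (t - s + 1)) / 2) * Rt t
          = (1/2) * Rt t + (1/2 - (∑ l ∈ Lv, ∑ s ∈ Finset.Icc 1 (t-1),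
              B l s * PrGe l (t - s + 1)) / 2) * Rt t := by ring
      rw [hb, hsplit] at hIH
      rw [ha, ht2, hV]
      linarith
  have hk := key T hT le_rfl
  have he : Finset.Icc (T+1) T = (∅ : Finset ℕ) := Finset.Icc_eq_empty (by omega)
  rw [he, Finset.sum_empty] at hk
  have hGT := hG T hT le_rfl
  have hRT0 := hRt0 T
  have hST : (0:ℝ) ≤ ∑ l ∈ Lv, B l T * r' l T :=
    Finset.sum_nonneg (fun l _ => mul_nonneg (hB l T) (hr' l T))
  have hmulT : (1 - (∑ l ∈ Lv, ∑ s ∈ Finset.Icc 1 (T-1),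
        B l s * PrGe l (T - s + 1)) / 2) * Rt T ≥ (1/2) * Rt T := by
    nlinarith [mul_nonneg (show (0:ℝ) ≤ 1/2 - (∑ l ∈ Lv, ∑ s ∈ Finset.Icc 1 (T-1),
        B l s * PrGe l (T - s + 1)) / 2 by linarith) hRT0]
  rw [icc_split_top (fun s => ∑ l ∈ Lv, B l s * r' l s) hT]
  linarith
end

section
/- Key step of Lemma 5: for δ > 0, θ ≥ 0, reals with R̃_{t+1} ≥ R̃_{t+t'} for all t' ≥ 1, q ∈ [0,1], p ≥ 0, r ≥ 0, and inductive hypothesis Q̃^δ ≥ q(r + Σ_{t'} Pr{d=t'} R̃^δ_{t+t'}) + (1-q)·((δ-θ)/δ)·R̃^δ_{t+1}, it follows that (δ/(δ+θ))·[p Q̃^δ + (1/L - p) R̃^δ_{t+1}] + (θ/(δ+θ))·(1/L)·R̃^δ_{t+1} ≥ (δ/(δ+θ))·[p Q̃^{δ+θ} + (1/L - p) R̃^{δ+θ}_{t+1}], where Q̃^{δ+θ} = q(r + Σ_{t'} Pr{d=t'} R̃^{δ+θ}_{t+t'}) + (1-q) R̃^δ_{t+1}, under the additional hypothesis R̃^δ_s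 ≥ (δ/(δ+θ)) R̃^{δ+θ}_s for all s > t (inductive hypothesis of Lemma 5). -/
/-- Key step of Lemma 5 (chain (56)–(58)): the scaled mixture of the
δ-budget values dominates the (δ+θ)-budget mixture. -/
theorem stmt14 (δ θ : ℝ) (hδ : 0 < δ) (hθ : 0 ≤ θ)
    (q : ℝ) (hq : 0 ≤ q ∧ q ≤ 1) (p : ℝ) (hp : 0 ≤ p)
    (L : ℕ) (hL : 1 ≤ L) (hpL : p ≤ 1 / (L : ℝ))
    (r : ℝ) (hr : 0 ≤ r)
    (m t : ℕ) (Pr : ℕ → ℝ) (hPr : ∀ d, 0 ≤ Pr d)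
    (hPrs : ∑ d ∈ Finset.Icc 1 m, Pr d ≤ 1)
    (Rδ Rδθ : ℕ → ℝ)
    (hR0 : ∀ s, t ≤ s → 0 ≤ Rδ s)
    (hmono : ∀ t' : ℕ, 1 ≤ t' → Rδ (t + 1) ≥ Rδ (t + t'))
    (hbud : ∀ s, t < s → Rδ s ≥ δ / (δ + θ) * Rδθ s)
    (Qδ Qδθ : ℝ)
    (hQδ : Qδ ≥ q * (r + ∑ t' ∈ Finset.Icc 1 m, Pr t' * Rδ (t + t'))
      + (1 - q) * ((δ - θ) / δ) * Rδ (t + 1))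
    (hQδθ : Qδθ = q * (r + ∑ t' ∈ Finset.Icc 1 m, Pr t' * Rδθ (t + t'))
      + (1 - q) * Rδ (t + 1)) :
    δ / (δ + θ) * (p * Qδ + (1 / (L : ℝ) - p) * Rδ (t + 1))
      + θ / (δ + θ) * (1 / (L : ℝ)) * Rδ (t + 1)
    ≥ δ / (δ + θ) * (p * Qδθ + (1 / (L : ℝ) - p) * Rδθ (t + 1)) := by
  obtain ⟨hq0, hq1⟩ := hq
  have hδθ : 0 < δ + θ := by linarith
  set c := δ / (δ + θ) with hc
  have hc0 : 0 ≤ c := by positivity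
  have hc1 : c ≤ 1 := by rw [hc, div_le_one hδθ]; linarith
  set A := Rδ (t + 1) with hA
  have hA0 : 0 ≤ A := hR0 _ (by omega)
  set S := ∑ t' ∈ Finset.Icc 1 m, Pr t' * Rδ (t + t') with hS
  set Sθ := ∑ t' ∈ Finset.Icc 1 m, Pr t' * Rδθ (t + t') with hSθ
  have hSA : S ≤ A := by
    calc S ≤ ∑ t' ∈ Finset.Icc 1 m, Pr t' * A := by
            apply Finset.sum_le_sum
            intro i hi
            have h1 : 1 ≤ i := (Finset.mem_Icc.mp hi).1
            exact mul_le_mul_of_nonneg_left (hmono i h1) (hPr i)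
      _ = (∑ t' ∈ Finset.Icc 1 m, Pr t') * A := by rw [Finset.sum_mul]
      _ ≤ 1 * A := mul_le_mul_of_nonneg_right hPrs hA0
      _ = A := one_mul A
  have hcS : c * Sθ ≤ S := by
    rw [hSθ, Finset.mul_sum, hS]
    apply Finset.sum_le_sum
    intro i hi
    have h1 : 1 ≤ i := (Finset.mem_Icc.mp hi).1
    have hb := hbud (t + i) (by omega)
    calc c * (Pr i * Rδθ (t + i)) = Pr i * (c * Rδθ (t + i)) := by ring
      _ ≤ Pr i * Rδ (t + i) := mul_le_mul_of_nonneg_left hb (hPr i)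
  have hBA : c * Rδθ (t + 1) ≤ A := hbud (t + 1) (by omega)
  -- arithmetic identities
  have hid2 : c * ((δ - θ) / δ) = 2 * c - 1 := by
    rw [hc]; field_simp; ring
  have hθc : θ / (δ + θ) = 1 - c := by
    rw [hc]; field_simp; ring
  -- key inequality: c * Qδθ ≤ c * Qδ + (1 - c) * A
  have hkey : c * Qδθ ≤ c * Qδ + (1 - c) * A := by
    have hcm : c * (q * (r + S) + (1 - q) * ((δ - θ) / δ) * A) ≤ c * Qδ :=
      mul_le_mul_of_nonneg_left hQδ hc0
    have hX : c * (q * (r + S) + (1 - q) * ((δ - θ) / δ) * A)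
        = c * q * (r + S) + (1 - q) * (2 * c - 1) * A := by
      linear_combination (1 - q) * A * hid2
    rw [hX] at hcm
    have h1 : 0 ≤ q * (S - c * Sθ) := mul_nonneg hq0 (by linarith)
    have h2 : 0 ≤ q * (1 - c) * (A - S) :=
      mul_nonneg (mul_nonneg hq0 (by linarith)) (by linarith)
    rw [hQδθ]
    nlinarith [hcm, h1, h2]
  have key1 : 0 ≤ p * (c * Qδ + (1 - c) * A - c * Qδθ) :=
    mul_nonneg hp (by linarith)
  have key2 : 0 ≤ (1 / (L : ℝ) - p) * (A - c * Rδθ (t + 1)) :=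
    mul_nonneg (by linarith) (by linarith)
  rw [hθc]
  nlinarith [key1, key2]
end

section
/- Reference system lower bound (limited rejections, Lemma 6): if the nonnegative sequence (R̃^{Δ_u}_{u,t})_{t∈[T]} satisfies R̃^{Δ_u}_{u,t} ≥ Σ_l B_{u,l,t} r'_{u,l,t} + Σ_l A_{u,l,t} R̃^{Δ_u}_{u,t+1} + Σ_l B_{u,l,t} Σ_{d'=2}^{T-t} Pr{d_l=d'} R̃^{Δ_u}_{u,t+d'} and R̃^{Δ_u}_{u,t} ≥ R̃^{Δ_u}_{u,t+1} for t ∈ [T-1], with R̃^{Δ_u}_{u,T} ≥ Σ_l B_{u,l,T} r'_{u,l,T}, where A_{u,l,t} = B_{u,l,t} Pr{d_l=1} + p'_{u,l,t}(1-q'_{u,l,t})(Δ_u-θ_l)/Δ_u + (1/L - p'_{u,l,t}), and if the dual multipliers λ_{u,t} satisfy λ_{u,t} ≤ 2 - 1/Δ_u for all t, then R̃^{Δ_u}_{u,1} ≥ (Δ_u/(3Δ_u - 1)) · Σ_{t∈[T]} Σ_l B_{u,l,t} r'_{u,l,t}. -/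
/-- Reference system lower bound, limited rejections (Lemma 6):
R̃^{Δ_u}_{u,1} ≥ (Δ_u/(3Δ_u-1)) Σ_{t∈[T]} Σ_l B_{l,t} r'_{l,t}. -/
theorem stmt17 {Λ : Type*} (Lv : Finset Λ) (L T Δ : ℕ)
    (hL : 1 ≤ L) (hT : 1 ≤ T) (hΔ : 1 ≤ Δ) (hcard : Lv.card = L)
    (θl : Λ → ℕ) (hθl : ∀ l ∈ Lv, 1 ≤ θl l)
    (p' q' : Λ → ℕ → ℝ)
    (hp'0 : ∀ l t, 0 ≤ p' l t) (hp's : ∀ t, ∑ l ∈ Lv, p' l t ≤ 1)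
    (hq' : ∀ l t, 0 ≤ q' l t ∧ q' l t ≤ 1)
    (B : Λ → ℕ → ℝ) (hB : ∀ l t, B l t = p' l t * q' l t)
    (r' : Λ → ℕ → ℝ) (hr' : ∀ l t, 0 ≤ r' l t)
    (Pr PrGe : Λ → ℕ → ℝ) (hPr0 : ∀ l d, 0 ≤ Pr l d)
    (hPrGe1 : ∀ l, PrGe l 1 = 1)
    (hPrGe : ∀ l k, PrGe l k = Pr l k + PrGe l (k + 1))
    (A : Λ → ℕ → ℝ)
    (hA : ∀ l t, A l t = B l t * Pr l 1
      + p' l t * (1 - q' l t) * (((Δ : ℝ) - (θl l : ℝ)) / (Δ : ℝ))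
      + (1 / (L : ℝ) - p' l t))
    (lam : ℕ → ℝ)
    (hlam : ∀ t, lam t =
      (1 / (Δ : ℝ)) * ∑ l ∈ Lv, ∑ t' ∈ Finset.Icc 1 (t - 1),
          p' l t' * (1 - q' l t') * (θl l : ℝ)
        + ∑ l ∈ Lv, ∑ t' ∈ Finset.Icc 1 (t - 1), B l t' * PrGe l (t - t' + 1))
    (hlamb : ∀ t, 1 ≤ t → t ≤ T → lam t ≤ 2 - 1 / (Δ : ℝ))
    (Rt : ℕ → ℝ) (hRt0 : ∀ t, 0 ≤ Rt t)
    (hrec : ∀ t, 1 ≤ t → t ≤ T - 1 →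
      Rt t ≥ ∑ l ∈ Lv, B l t * r' l t + ∑ l ∈ Lv, A l t * Rt (t + 1)
        + ∑ l ∈ Lv, B l t * ∑ d' ∈ Finset.Icc 2 (T - t), Pr l d' * Rt (t + d'))
    (hmono : ∀ t, 1 ≤ t → t ≤ T - 1 → Rt t ≥ Rt (t + 1))
    (hRT : Rt T ≥ ∑ l ∈ Lv, B l T * r' l T) :
    Rt 1 ≥ ((Δ : ℝ) / (3 * (Δ : ℝ) - 1)) *
      ∑ t ∈ Finset.Icc 1 T, ∑ l ∈ Lv, B l t * r' l t := by
  classical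
  set γ : ℝ := (Δ : ℝ) / (3 * (Δ : ℝ) - 1) with hγdef
  have hΔ1 : (1:ℝ) ≤ (Δ:ℝ) := by exact_mod_cast hΔ
  have hΔpos : (0:ℝ) < (Δ:ℝ) := by linarith
  have hΔne : (Δ:ℝ) ≠ 0 := ne_of_gt hΔpos
  have hden : (0:ℝ) < 3 * (Δ:ℝ) - 1 := by linarith
  have hdenne : (3 * (Δ:ℝ) - 1) ≠ 0 := ne_of_gt hden
  have hγ0 : 0 ≤ γ := le_of_lt (div_pos hΔpos hden)
  have hγ1 : γ ≤ 1 := by rw [hγdef, div_le_one hden]; linarith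
  have hγeq : γ + γ * (2 - 1/(Δ:ℝ)) = 1 := by
    rw [hγdef]; field_simp; rw [div_eq_one_iff_eq (by linarith)]; ring
  have hβnn : ∀ t, 1 ≤ t → t ≤ T → 0 ≤ 1 - γ - γ * lam t := by
    intro t h1 h2
    have h3 := hlamb t h1 h2
    have h4 : γ * lam t ≤ γ * (2 - 1/(Δ:ℝ)) := mul_le_mul_of_nonneg_left h3 hγ0
    linarith
  have hBnn : ∀ l t, 0 ≤ B l t := by
    intro l t; rw [hB]; exact mul_nonneg (hp'0 l t) (hq' l t).1
  have hrewnn : ∀ t, 0 ≤ ∑ l ∈ Lv, B l t * r' l t :=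
    fun t => Finset.sum_nonneg fun l _ => mul_nonneg (hBnn l t) (hr' l t)
  -- trivial case T = 1
  rcases Nat.lt_or_ge T 2 with hT2 | hT2
  · have hTe : T = 1 := by omega
    subst hTe
    rw [Finset.Icc_self, Finset.sum_singleton]
    nlinarith [hRT, hrewnn 1, hγ1, hγ0]
  -- main case T ≥ 2
  have hIcc10 : Finset.Icc 1 0 = (∅ : Finset ℕ) := by
    apply Finset.Icc_eq_empty; omega
  have hlam1 : lam 1 = 0 := by
    rw [hlam 1]; norm_num [hIcc10]
  -- Σ_l 1/L = 1
  have hone : ∑ _l ∈ Lv, (1/(L:ℝ)) = 1 := by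
    rw [Finset.sum_const, hcard, nsmul_eq_mul]
    have : (L:ℝ) ≠ 0 := Nat.cast_ne_zero.mpr (by omega)
    field_simp
  -- 1 - Σ A in terms of PrGe 2 and θ
  have hSAeq : ∀ t, (1:ℝ) - ∑ l ∈ Lv, A l t
      = (∑ l ∈ Lv, B l t * PrGe l 2)
        + (1/(Δ:ℝ)) * ∑ l ∈ Lv, p' l t * (1 - q' l t) * (θl l : ℝ) := by
    intro t
    have step : ∀ l ∈ Lv, 1/(L:ℝ) - A l t
        = B l t * PrGe l 2 + 1/(Δ:ℝ) * (p' l t * (1 - q' l t) * (θl l : ℝ)) := by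
      intro l _
      have hPr1 : Pr l 1 = 1 - PrGe l 2 := by
        have h1 := hPrGe l 1; have h2 := hPrGe1 l; linarith
      rw [hA, hB, hPr1]
      field_simp
      ring
    calc (1:ℝ) - ∑ l ∈ Lv, A l t
        = ∑ l ∈ Lv, (1/(L:ℝ) - A l t) := by rw [Finset.sum_sub_distrib, hone]
      _ = ∑ l ∈ Lv, (B l t * PrGe l 2 + 1/(Δ:ℝ) * (p' l t * (1 - q' l t) * (θl l : ℝ))) :=
          Finset.sum_congr rfl step
      _ = (∑ l ∈ Lv, B l t * PrGe l 2)
            + (1/(Δ:ℝ)) * ∑ l ∈ Lv, p' l t * (1 - q' l t) * (θl l : ℝ) := by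
          rw [Finset.sum_add_distrib, Finset.mul_sum]
  -- key per-step identity
  have keyt : ∀ t, 1 ≤ t →
      γ + (1 - γ - γ * lam (t+1)) =
        γ * (∑ l ∈ Lv, A l t) + (1 - γ - γ * lam t)
          + γ * ∑ t' ∈ Finset.Icc 1 (t-1), ∑ l ∈ Lv, B l t' * Pr l (t - t' + 1) := by
    intro t ht
    obtain ⟨u, rfl⟩ : ∃ u, t = u + 1 := ⟨t - 1, by omega⟩
    rw [show u + 1 - 1 = u from by omega]
    have hdiff : lam (u+1+1) - lam (u+1)
        = ((1:ℝ) - ∑ l ∈ Lv, A l (u+1))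
          - ∑ t' ∈ Finset.Icc 1 u, ∑ l ∈ Lv, B l t' * Pr l (u + 1 - t' + 1) := by
      rw [hlam (u+1+1), hlam (u+1), show u+1+1-1 = u+1 from by omega,
        show u+1-1 = u from by omega, hSAeq (u+1)]
      have hs1 : (∑ l ∈ Lv, ∑ t' ∈ Finset.Icc 1 (u+1), p' l t' * (1 - q' l t') * (θl l : ℝ))
          = (∑ l ∈ Lv, ∑ t' ∈ Finset.Icc 1 u, p' l t' * (1 - q' l t') * (θl l : ℝ))
            + ∑ l ∈ Lv, p' l (u+1) * (1 - q' l (u+1)) * (θl l : ℝ) := by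
        rw [← Finset.sum_add_distrib]
        exact Finset.sum_congr rfl fun l _ => Finset.sum_Icc_succ_top (by omega) _
      have hs2 : (∑ l ∈ Lv, ∑ t' ∈ Finset.Icc 1 (u+1), B l t' * PrGe l (u+1+1 - t' + 1))
          = ((∑ l ∈ Lv, ∑ t' ∈ Finset.Icc 1 u, B l t' * PrGe l (u+1 - t' + 1))
            - ∑ l ∈ Lv, ∑ t' ∈ Finset.Icc 1 u, B l t' * Pr l (u+1 - t' + 1))
            + ∑ l ∈ Lv, B l (u+1) * PrGe l 2 := by
        rw [← Finset.sum_sub_distrib, ← Finset.sum_add_distrib]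
        refine Finset.sum_congr rfl fun l _ => ?_
        rw [Finset.sum_Icc_succ_top (by omega), show u+1+1 - (u+1) + 1 = 2 from by omega,
          ← Finset.sum_sub_distrib]
        congr 1
        refine Finset.sum_congr rfl fun t' ht' => ?_
        have ht'u : t' ≤ u := (Finset.mem_Icc.mp ht').2
        rw [show u+1+1 - t' + 1 = (u+1 - t' + 1) + 1 from by omega]
        linear_combination (-(B l t')) * hPrGe l (u+1 - t' + 1)
      have hcomm : (∑ t' ∈ Finset.Icc 1 u, ∑ l ∈ Lv, B l t' * Pr l (u + 1 - t' + 1))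
          = ∑ l ∈ Lv, ∑ t' ∈ Finset.Icc 1 u, B l t' * Pr l (u + 1 - t' + 1) :=
        Finset.sum_comm
      rw [hs1, hs2, hcomm]
      ring
    linear_combination (-γ) * hdiff
  -- reindexing of the delay double sum
  have hD : (∑ t ∈ Finset.Icc 1 (T-1),
        (∑ t' ∈ Finset.Icc 1 (t-1), ∑ l ∈ Lv, B l t' * Pr l (t - t' + 1)) * Rt (t+1))
      = ∑ t ∈ Finset.Icc 1 (T-1),
        ∑ l ∈ Lv, B l t * ∑ d' ∈ Finset.Icc 2 (T - t), Pr l d' * Rt (t + d') := by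
    have lhs_eq : ∀ t ∈ Finset.Icc 1 (T-1),
        (∑ t' ∈ Finset.Icc 1 (t-1), ∑ l ∈ Lv, B l t' * Pr l (t - t' + 1)) * Rt (t+1)
        = ∑ t' ∈ Finset.Icc 1 (t-1), ∑ l ∈ Lv, B l t' * Pr l (t - t' + 1) * Rt (t+1) := by
      intro t _
      rw [Finset.sum_mul]
      exact Finset.sum_congr rfl fun t' _ => Finset.sum_mul _ _ _
    have rhs_eq : ∀ t' ∈ Finset.Icc 1 (T-1),
        (∑ l ∈ Lv, B l t' * ∑ d' ∈ Finset.Icc 2 (T - t'), Pr l d' * Rt (t' + d'))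
        = ∑ t ∈ Finset.Icc (t'+1) (T-1), ∑ l ∈ Lv, B l t' * Pr l (t - t' + 1) * Rt (t+1) := by
      intro t' ht'
      obtain ⟨h1, h2⟩ := Finset.mem_Icc.mp ht'
      have step : ∀ l ∈ Lv, B l t' * ∑ d' ∈ Finset.Icc 2 (T - t'), Pr l d' * Rt (t' + d')
          = ∑ d' ∈ Finset.Icc 2 (T - t'), B l t' * Pr l d' * Rt (t' + d') := by
        intro l _
        rw [Finset.mul_sum]
        exact Finset.sum_congr rfl fun d' _ => (mul_assoc _ _ _).symm
      rw [Finset.sum_congr rfl step, Finset.sum_comm]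
      refine Finset.sum_bij' (fun d' _ => t' + d' - 1) (fun t _ => t - t' + 1)
        ?_ ?_ ?_ ?_ ?_
      · intro d' hd'
        simp only [Finset.mem_Icc] at hd' ⊢
        omega
      · intro t ht
        simp only [Finset.mem_Icc] at ht ⊢
        omega
      · intro d' hd'
        simp only [Finset.mem_Icc] at hd'
        show t' + d' - 1 - t' + 1 = d'
        omega
      · intro t ht
        simp only [Finset.mem_Icc] at ht
        show t' + (t - t' + 1) - 1 = t
        omega
      · intro d' hd'
        simp only [Finset.mem_Icc] at hd'
        rw [show t' + d' - 1 - t' + 1 = d' from by omega,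
          show t' + d' - 1 + 1 = t' + d' from by omega]
    rw [Finset.sum_congr rfl lhs_eq, Finset.sum_congr rfl rhs_eq]
    refine Finset.sum_comm' ?_
    intro x y
    simp only [Finset.mem_Icc]
    omega
  -- telescoping
  have htel0 : ∀ (f : ℕ → ℝ) (n : ℕ),
      ∑ t ∈ Finset.Icc 1 n, (f t - f (t+1)) = f 1 - f (n+1) := by
    intro f n
    induction n with
    | zero => rw [hIcc10]; simp
    | succ m ih => rw [Finset.sum_Icc_succ_top (by omega), ih]; ring
  have htel := htel0 (fun s => (γ + (1 - γ - γ * lam s)) * Rt s) (T-1)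
  rw [show T - 1 + 1 = T from by omega] at htel
  -- the main identity
  have key : Rt 1 - (1 - γ - γ * lam T) * Rt T
      = (∑ t ∈ Finset.Icc 1 (T-1),
          (γ * Rt t + (1 - γ - γ * lam t) * (Rt t - Rt (t+1))
            - γ * ((∑ l ∈ Lv, A l t) * Rt (t+1)
              + ∑ l ∈ Lv, B l t * ∑ d' ∈ Finset.Icc 2 (T - t), Pr l d' * Rt (t + d'))))
        + γ * Rt T := by
    have hsummand : ∀ t ∈ Finset.Icc 1 (T-1),
        γ * Rt t + (1 - γ - γ * lam t) * (Rt t - Rt (t+1))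
          - γ * ((∑ l ∈ Lv, A l t) * Rt (t+1)
            + ∑ l ∈ Lv, B l t * ∑ d' ∈ Finset.Icc 2 (T - t), Pr l d' * Rt (t + d'))
        = ((γ + (1 - γ - γ * lam t)) * Rt t - (γ + (1 - γ - γ * lam (t+1))) * Rt (t+1))
          + ((∑ t' ∈ Finset.Icc 1 (t-1), ∑ l ∈ Lv, B l t' * Pr l (t - t' + 1)) * Rt (t+1)) * γ
          - (∑ l ∈ Lv, B l t * ∑ d' ∈ Finset.Icc 2 (T - t), Pr l d' * Rt (t + d')) * γ := by
      intro t ht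
      have h1 := (Finset.mem_Icc.mp ht).1
      linear_combination Rt (t+1) * keyt t h1
    rw [Finset.sum_congr rfl hsummand, Finset.sum_sub_distrib, Finset.sum_add_distrib,
      htel, ← Finset.sum_mul, ← Finset.sum_mul, hD, hlam1]
    ring
  -- assemble inequalities
  have hbound : ∀ t ∈ Finset.Icc 1 (T-1),
      γ * (∑ l ∈ Lv, B l t * r' l t)
        ≤ γ * Rt t + (1 - γ - γ * lam t) * (Rt t - Rt (t+1))
          - γ * ((∑ l ∈ Lv, A l t) * Rt (t+1)
            + ∑ l ∈ Lv, B l t * ∑ d' ∈ Finset.Icc 2 (T - t), Pr l d' * Rt (t + d')) := by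
    intro t ht
    obtain ⟨h1, h2⟩ := Finset.mem_Icc.mp ht
    have hrect := hrec t h1 h2
    rw [show (∑ l ∈ Lv, A l t * Rt (t+1)) = (∑ l ∈ Lv, A l t) * Rt (t+1) from
      (Finset.sum_mul _ _ _).symm] at hrect
    have hm := hmono t h1 h2
    have hb : 0 ≤ 1 - γ - γ * lam t := hβnn t h1 (by omega)
    have h5 : γ * ((∑ l ∈ Lv, B l t * r' l t) + (∑ l ∈ Lv, A l t) * Rt (t+1)
        + ∑ l ∈ Lv, B l t * ∑ d' ∈ Finset.Icc 2 (T - t), Pr l d' * Rt (t + d'))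
        ≤ γ * Rt t := mul_le_mul_of_nonneg_left hrect hγ0
    have h6 : 0 ≤ (1 - γ - γ * lam t) * (Rt t - Rt (t+1)) :=
      mul_nonneg hb (by linarith)
    nlinarith [h5, h6]
  have hβT : 0 ≤ 1 - γ - γ * lam T := hβnn T (by omega) le_rfl
  have hchain1 : Rt 1 - (1 - γ - γ * lam T) * Rt T ≤ Rt 1 := by
    nlinarith [mul_nonneg hβT (hRt0 T)]
  have hchain2 : (∑ t ∈ Finset.Icc 1 (T-1), γ * (∑ l ∈ Lv, B l t * r' l t))
      + γ * (∑ l ∈ Lv, B l T * r' l T)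
      ≤ Rt 1 - (1 - γ - γ * lam T) * Rt T := by
    rw [key]
    exact add_le_add (Finset.sum_le_sum hbound) (mul_le_mul_of_nonneg_left hRT hγ0)
  have hsplit := Finset.sum_Icc_succ_top (a := 1) (b := T-1) (by omega)
    (fun t => ∑ l ∈ Lv, B l t * r' l t)
  rw [show T - 1 + 1 = T from by omega] at hsplit
  rw [ge_iff_le, hsplit, mul_add]
  linarith [hchain1, hchain2, Finset.mul_sum (Finset.Icc 1 (T-1)) (fun t => ∑ l ∈ Lv, B l t * r' l t) γ]
end
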